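/- Let φ(v) = rv/(K + v) with r, K > 0, μ ∈ (0, r), γ > 0, and suppose a trajectory satisfies x' = x(φ(v(t)) − μ − γx) with x(t) bounded, x(t) > 0, and liminf of the time averages ⟨v⟩_t ≥ V̄ > 0, where v(t) ∈ [0, S]. If rV̄/(K + S) > μ, then liminf_{t→∞} ⟨x⟩_t ≥ (rV̄/(K+S) − μ)/γ > 0; in particular liminf_{t→∞} x-time-averages are strictly positive. -/

import Mathlib

open MeasureTheory intervalIntegral

/-!
Integrating `(log x)' = φ(v) - μ - γ x` over `[0, t]` and using that `log x` stays below `log C`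
gives `γ ∫₀ᵗ x ≥ ∫₀ᵗ φ(v) - μ t - (log C - log x(0))`. Since `φ(v) ≥ r v / (K + S)` on `[0, S]`,
dividing by `γ t` bounds `⟨x⟩_t` below by an affine function of `⟨v⟩_t` plus an `O(1/t)` error,
and the bound passes to the liminf.
-/

open Filter Set Topology

noncomputable def timeAverage (f : ℝ → ℝ) (t : ℝ) : ℝ :=
  (1 / t) * ∫ s in (0 : ℝ)..t, f s

lemma timeAverage_nonneg {f : ℝ → ℝ} {t : ℝ} (ht : 0 ≤ t) (hf : ∀ s ∈ Icc 0 t, 0 ≤ f s) :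
    0 ≤ timeAverage f t :=
  mul_nonneg (by positivity) (integral_nonneg ht hf)

lemma timeAverage_le {f : ℝ → ℝ} {t C : ℝ} (ht : 0 < t) (hf : IntervalIntegrable f volume 0 t)
    (hfC : ∀ s ∈ Icc 0 t, f s ≤ C) : timeAverage f t ≤ C := by
  have hint : (∫ s in (0 : ℝ)..t, f s) ≤ t * C := by
    simpa using integral_mono_on ht.le hf intervalIntegrable_const hfC
  calc timeAverage f t ≤ (1 / t) * (t * C) := by unfold timeAverage; gcongr
    _ = C := by field_simp

lemma integral_eq_log_sub_log_of_hasDerivAt_mul {x g : ℝ → ℝ} {a b : ℝ} (hab : a ≤ b)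
    (hpos : ∀ s ∈ Icc a b, 0 < x s) (hderiv : ∀ s ∈ Icc a b, HasDerivAt x (x s * g s) s)
    (hg : IntervalIntegrable g volume a b) :
    ∫ s in a..b, g s = Real.log (x b) - Real.log (x a) := by
  refine integral_eq_sub_of_hasDerivAt (f := fun s => Real.log (x s)) (fun s hs => ?_) hg
  rw [uIcc_of_le hab] at hs
  have hxs := (hpos s hs).ne'
  simpa [hxs] using (hderiv s hs).log hxs

lemma le_liminf_of_eventually_mul_add_le {α : Type*} {l : Filter α} {f g e : α → ℝ}
    {k a b : ℝ} (hk : 0 < k) (hg : IsBoundedUnder (· ≥ ·) l g)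
    (hf : IsCoboundedUnder (· ≥ ·) l f) (ha : a ≤ liminf g l) (he : Tendsto e l (𝓝 0))
    (h : ∀ᶠ t in l, k * g t + b + e t ≤ f t) : k * a + b ≤ liminf f l := by
  refine le_of_forall_sub_le fun ε hε => le_liminf_of_le hf ?_
  have hδ : 0 < ε / (2 * k) := by positivity
  have hg' : ∀ᶠ t in l, a - ε / (2 * k) < g t :=
    eventually_lt_of_lt_liminf (by linarith) hg
  have he' : ∀ᶠ t in l, -(ε / 2) < e t := he.eventually (lt_mem_nhds (by linarith))
  filter_upwards [hg', he', h] with t hgt het ht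
  have hscaled : k * (a - ε / (2 * k)) = k * a - ε / 2 := by field_simp
  linarith [mul_lt_mul_of_pos_left hgt hk]

section Chemostat

variable {r K γ S μ C : ℝ} {v x : ℝ → ℝ}

lemma continuousOn_monod (hK : 0 < K) (hvcont : Continuous v) {T : Set ℝ}
    (hv : ∀ s ∈ T, 0 ≤ v s) : ContinuousOn (fun s => r * v s / (K + v s)) T :=
  (continuous_const.mul hvcont).continuousOn.div (continuous_const.add hvcont).continuousOn
    fun s hs => by linarith [hv s hs]

lemma integral_monod_ge (hK : 0 < K) (hr : 0 < r) (hvcont : Continuous v) {t : ℝ} (ht : 0 ≤ t)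
    (hv : ∀ s ∈ Icc 0 t, v s ∈ Icc 0 S) :
    r / (K + S) * ∫ s in (0 : ℝ)..t, v s ≤ ∫ s in (0 : ℝ)..t, r * v s / (K + v s) := by
  rw [← intervalIntegral.integral_const_mul]
  refine integral_mono_on ht ((hvcont.intervalIntegrable 0 t).const_mul _)
    ((continuousOn_monod hK hvcont fun s hs => (hv s hs).1).intervalIntegrable_of_Icc ht)
    fun s hs => ?_
  obtain ⟨hv0, hvS⟩ := hv s hs
  calc r / (K + S) * v s = r * v s / (K + S) := by ring
    _ ≤ r * v s / (K + v s) := by gcongr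

lemma timeAverage_lower_bound_of_monod (hr : 0 < r) (hK : 0 < K) (hvcont : Continuous v)
    (hv : ∀ t, 0 ≤ t → v t ∈ Icc 0 S) (hxpos : ∀ t, 0 ≤ t → 0 < x t)
    (hxbd : ∀ t, 0 ≤ t → x t ≤ C)
    (hode : ∀ t, 0 ≤ t → HasDerivAt x (x t * (r * v t / (K + v t) - μ - γ * x t)) t)
    {t : ℝ} (ht : 0 < t) :
    r / (K + S) * timeAverage v t - μ - (Real.log C - Real.log (x 0)) / t
      ≤ γ * timeAverage x t := by
  have hxcont : ContinuousOn x (Icc 0 t) := HasDerivAt.continuousOn fun s hs => hode s hs.1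
  have hφ : IntervalIntegrable (fun s => r * v s / (K + v s)) volume 0 t :=
    (continuousOn_monod hK hvcont fun s hs => (hv s hs.1).1).intervalIntegrable_of_Icc ht.le
  have hx : IntervalIntegrable x volume 0 t := hxcont.intervalIntegrable_of_Icc ht.le
  have hlog := integral_eq_log_sub_log_of_hasDerivAt_mul ht.le (fun s hs => hxpos s hs.1)
    (fun s hs => hode s hs.1) ((hφ.sub intervalIntegrable_const).sub (hx.const_mul γ))
  rw [integral_sub (hφ.sub intervalIntegrable_const) (hx.const_mul γ),
    integral_sub hφ intervalIntegrable_const, intervalIntegral.integral_const,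
    intervalIntegral.integral_const_mul, smul_eq_mul, sub_zero] at hlog
  have hmonod := integral_monod_ge hK hr hvcont ht.le fun s hs => hv s hs.1
  have hlogC : Real.log (x t) ≤ Real.log C := Real.log_le_log (hxpos t ht.le) (hxbd t ht.le)
  have hintegrated : r / (K + S) * (∫ s in (0 : ℝ)..t, v s) - μ * t
      - (Real.log C - Real.log (x 0)) ≤ γ * ∫ s in (0 : ℝ)..t, x s := by
    linarith
  unfold timeAverage
  calc r / (K + S) * (1 / t * ∫ s in (0 : ℝ)..t, v s) - μ - (Real.log C - Real.log (x 0)) / t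
      = (r / (K + S) * (∫ s in (0 : ℝ)..t, v s) - μ * t
          - (Real.log C - Real.log (x 0))) / t := by field_simp
    _ ≤ (γ * ∫ s in (0 : ℝ)..t, x s) / t := by gcongr
    _ = γ * (1 / t * ∫ s in (0 : ℝ)..t, x s) := by ring

end Chemostat

theorem stmt15_general (r K μ γ S Vbar C : ℝ)
    (hr : 0 < r) (hK : 0 < K) (hγ : 0 < γ)
    (hS : 0 < S)
    (hcrit : μ < r * Vbar / (K + S))
    (v x : ℝ → ℝ)
    (hv : ∀ t, 0 ≤ t → v t ∈ Set.Icc 0 S)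
    (hvcont : Continuous v)
    (hxpos : ∀ t, 0 ≤ t → 0 < x t) (hxbd : ∀ t, 0 ≤ t → x t ≤ C)
    (hliminfv : Vbar ≤ Filter.liminf
      (fun t => (1 / t) * ∫ s in (0:ℝ)..t, v s) Filter.atTop)
    (hode : ∀ t, 0 ≤ t →
      HasDerivAt x (x t * (r * v t / (K + v t) - μ - γ * x t)) t) :
    (r * Vbar / (K + S) - μ) / γ ≤
      Filter.liminf (fun t => (1 / t) * ∫ s in (0:ℝ)..t, x s) Filter.atTop ∧
      0 < (r * Vbar / (K + S) - μ) / γ := by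
  show _ ≤ liminf (timeAverage x) atTop ∧ _
  refine ⟨?_, div_pos (sub_pos.2 hcrit) hγ⟩
  set D := Real.log C - Real.log (x 0)
  have hv_bdd : IsBoundedUnder (· ≥ ·) atTop (timeAverage v) :=
    isBoundedUnder_of_eventually_ge <| (eventually_ge_atTop 0).mono fun t ht =>
      timeAverage_nonneg ht fun s hs => (hv s hs.1).1
  have hx_cobdd : IsCoboundedUnder (· ≥ ·) atTop (timeAverage x) :=
    isCoboundedUnder_ge_of_eventually_le _ <| (eventually_gt_atTop 0).mono fun t ht =>
      timeAverage_le ht ((HasDerivAt.continuousOn fun s hs => hode s hs.1).intervalIntegrable_of_Icc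
        ht.le) fun s hs => hxbd s hs.1
  have hbound : ∀ᶠ t in atTop,
      r / (K + S) / γ * timeAverage v t + -μ / γ + -D / γ / t ≤ timeAverage x t :=
    (eventually_gt_atTop 0).mono fun t ht => by
      have hγbound := timeAverage_lower_bound_of_monod hr hK hvcont hv hxpos hxbd hode ht
      calc r / (K + S) / γ * timeAverage v t + -μ / γ + -D / γ / t
          = (r / (K + S) * timeAverage v t - μ - D / t) / γ := by ring
        _ ≤ timeAverage x t := by rw [div_le_iff₀ hγ]; linarith
  convert le_liminf_of_eventually_mul_add_le (by positivity) hv_bdd hx_cobdd hliminfv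
    (tendsto_const_nhds.div_atTop tendsto_id) hbound using 1
  ring

/-- Proposition 3(a): persistence in time-average. If `x' = x(φ(v) - μ - γx)`
with `v(t) ∈ [0,S]`, `liminf ⟨v⟩_t ≥ V̄` and `r V̄/(K+S) > μ`, then
`liminf ⟨x⟩_t ≥ (r V̄/(K+S) - μ)/γ > 0`. -/
theorem stmt15 (r K μ γ S Vbar C : ℝ)
    (hr : 0 < r) (hK : 0 < K) (hμ : 0 < μ) (hμr : μ < r) (hγ : 0 < γ)
    (hS : 0 < S) (hV : 0 < Vbar)
    (hcrit : μ < r * Vbar / (K + S))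
    (v x : ℝ → ℝ)
    (hv : ∀ t, 0 ≤ t → v t ∈ Set.Icc 0 S)
    (hvcont : Continuous v)
    (hxpos : ∀ t, 0 ≤ t → 0 < x t) (hxbd : ∀ t, 0 ≤ t → x t ≤ C)
    (hliminfv : Vbar ≤ Filter.liminf
      (fun t => (1 / t) * ∫ s in (0:ℝ)..t, v s) Filter.atTop)
    (hode : ∀ t, 0 ≤ t →
      HasDerivAt x (x t * (r * v t / (K + v t) - μ - γ * x t)) t) :
    (r * Vbar / (K + S) - μ) / γ ≤
      Filter.liminf (fun t => (1 / t) * ∫ s in (0:ℝ)..t, x s) Filter.atTop ∧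
      0 < (r * Vbar / (K + S) - μ) / γ :=
  stmt15_general r K μ γ S Vbar C hr hK hγ hS hcrit v x hv hvcont hxpos hxbd hliminfv hode
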